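/- There are no positive rational numbers $b_1, b_2$ such that $b_1 b_2 (b_1 + b_2) = 1$. -/

import Mathlib

/-!
Clearing denominators gives integers with `a * b * (a + b) = n ^ 3`, `n ≠ 0`. After dividing out
`gcd(a, b)`, the factors `a * b` and `a + b`, and then `a` and `b`, are coprime with cube product,
so `a`, `b` and `a + b` are cubes: a nontrivial solution of `x ^ 3 + y ^ 3 = z ^ 3`, which
Fermat's Last Theorem for exponent 3 excludes.
-/

theorem IsCoprime.mul_add_self {R : Type*} [CommRing R] {u v : R} (h : IsCoprime u v) :
    IsCoprime (u * v) (u + v) :=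
  .mul_left (by simpa [add_comm] using h.add_mul_left_right 1)
    (by simpa using h.symm.add_mul_left_right 1)

theorem Int.mul_mul_add_ne_cube_of_isCoprime {u v m : ℤ} (huv : IsCoprime u v) (hm : m ≠ 0) :
    u * v * (u + v) ≠ m ^ 3 := by
  intro h
  have hodd : Odd 3 := by decide
  obtain ⟨z, hz⟩ := Int.eq_pow_of_mul_eq_pow_odd_right huv.mul_add_self hodd h
  obtain ⟨w, hw⟩ := Int.eq_pow_of_mul_eq_pow_odd_left huv.mul_add_self hodd h
  obtain ⟨x, hx⟩ := Int.eq_pow_of_mul_eq_pow_odd_left huv hodd hw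
  obtain ⟨y, hy⟩ := Int.eq_pow_of_mul_eq_pow_odd_right huv hodd hw
  have hprod : x * y * z ≠ 0 := by
    intro h0
    apply pow_ne_zero 3 hm
    rw [← h, hz, hx, hy]
    linear_combination (x * y * z) ^ 2 * h0
  simp only [mul_ne_zero_iff] at hprod
  exact fermatLastTheoremFor_iff_int.mp fermatLastTheoremThree x y z hprod.1.1 hprod.1.2 hprod.2
    (by rw [← hx, ← hy, ← hz])

theorem Int.mul_mul_add_ne_cube {a b n : ℤ} (hn : n ≠ 0) : a * b * (a + b) ≠ n ^ 3 := by
  intro h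
  have ha : a ≠ 0 := by rintro rfl; exact pow_ne_zero 3 hn (by simpa using h.symm)
  obtain ⟨g, u, v, hg, huv, rfl, rfl⟩ := Int.exists_gcd_one' (Int.gcd_pos_of_ne_zero_left b ha)
  have hg0 : (g : ℤ) ^ 3 ≠ 0 := by positivity
  obtain ⟨m, rfl⟩ : (g : ℤ) ∣ n := by
    rw [← Int.pow_dvd_pow_iff three_ne_zero]
    exact ⟨u * v * (u + v), by rw [← h]; ring⟩
  refine Int.mul_mul_add_ne_cube_of_isCoprime (Int.isCoprime_iff_gcd_eq_one.mpr huv)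
    (right_ne_zero_of_mul hn) (mul_left_cancel₀ hg0 ?_)
  linear_combination h

theorem Rat.mul_mul_add_ne_one (a b : ℚ) : a * b * (a + b) ≠ 1 := by
  intro h
  have hd : ((a.den * b.den : ℕ) : ℤ) ≠ 0 := by positivity
  refine Int.mul_mul_add_ne_cube hd (a := a.num * b.den) (b := b.num * a.den) ?_
  have hcast : (((a.num * b.den) * (b.num * a.den) * (a.num * b.den + b.num * a.den) : ℤ) : ℚ)
      = (((a.den * b.den : ℕ) : ℤ) ^ 3 : ℤ) := by
    push_cast
    rw [← Rat.mul_den_eq_num a, ← Rat.mul_den_eq_num b]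
    linear_combination ((a.den : ℚ) * b.den) ^ 3 * h
  exact_mod_cast hcast

theorem stmt_1 : ¬ ∃ (b₁ b₂ : ℚ), 0 < b₁ ∧ 0 < b₂ ∧
    b₁ * b₂ * (b₁ + b₂) = 1 := by
  rintro ⟨b₁, b₂, -, -, h⟩
  exact Rat.mul_mul_add_ne_one b₁ b₂ h
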